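/- Let (H,R) be a quasitriangular crossed Hopf π-coalgebra with Drinfeld elements u_α = (s_{α⁻¹}∘φ_α)(ζ_{(α⁻¹).i}) ξ_{(α).i} ∈ H_α. Then each u_α is invertible, with inverse u_α⁻¹ = s_α⁻¹(ζ̃_{(α⁻¹).i}) ξ̃_{(α).i}, where R⁻¹_{α,α⁻¹} = ξ̃_{(α).i} ⊗ ζ̃_{(α⁻¹).i}. -/

import Mathlib

/- Crossed Hopf π-coalgebras (Turaev coalgebras). -/

open TensorProduct

universe u

variable (k : Type u) [Field k] (π : Type u) [Group π]

/-- Cast along an equality of indices, as a `k`-linear map. -/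
def lcast (A : π → Type u) [∀ α, Ring (A α)] [∀ α, Algebra k (A α)]
    {α β : π} (h : α = β) : A α →ₗ[k] A β where
  toFun x := cast (congrArg A h) x
  map_add' := by subst h; intro x y; rfl
  map_smul' := by subst h; intro c x; rfl

/-- A crossed Hopf `π`-coalgebra (Turaev coalgebra) structure on a family of
`k`-algebras `A α`. -/
structure TCoalgStruct (A : π → Type u) [∀ α, Ring (A α)] [∀ α, Algebra k (A α)] where
  /-- comultiplication -/
  Δ : ∀ α β : π, A (α * β) →ₐ[k] (A α ⊗[k] A β)
  /-- counit -/
  ε : A 1 →ₐ[k] k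
  /-- antipode -/
  s : ∀ α : π, A α →ₗ[k] A α⁻¹
  /-- conjugation -/
  φ : ∀ β α : π, A α →ₐ[k] A (β * α * β⁻¹)
  φ_bij : ∀ β α : π, Function.Bijective (φ β α)
  coassoc : ∀ (α β γ : π) (h : A (α * β * γ)),
    (TensorProduct.assoc k (A α) (A β) (A γ))
        (TensorProduct.map (Δ α β).toLinearMap LinearMap.id (Δ (α * β) γ h)) =
      TensorProduct.map LinearMap.id (Δ β γ).toLinearMap
        (Δ α (β * γ) (cast (congrArg A (mul_assoc α β γ)) h))
  counit_left : ∀ (α : π) (h : A (1 * α)),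
    TensorProduct.lid k (A α)
        (TensorProduct.map (ε).toLinearMap LinearMap.id (Δ 1 α h)) =
      cast (congrArg A (one_mul α)) h
  counit_right : ∀ (α : π) (h : A (α * 1)),
    TensorProduct.rid k (A α)
        (TensorProduct.map LinearMap.id (ε).toLinearMap (Δ α 1 h)) =
      cast (congrArg A (mul_one α)) h
  antipode_right : ∀ (α : π) (h : A (α * α⁻¹)),
    LinearMap.mul' k (A α)
        (TensorProduct.map LinearMap.id
          ((lcast k π A (inv_inv α)).comp (s α⁻¹)) (Δ α α⁻¹ h)) =
      algebraMap k (A α) (ε (cast (congrArg A (by group : α * α⁻¹ = 1)) h))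
  antipode_left : ∀ (α : π) (h : A (α⁻¹ * α)),
    LinearMap.mul' k (A α)
        (TensorProduct.map ((lcast k π A (inv_inv α)).comp (s α⁻¹)) LinearMap.id
          (Δ α⁻¹ α h)) =
      algebraMap k (A α) (ε (cast (congrArg A (by group : α⁻¹ * α = 1)) h))
  φ_mul : ∀ (β γ α : π) (h : A α),
    cast (congrArg A (by group : β * (γ * α * γ⁻¹) * β⁻¹ = β * γ * α * (β * γ)⁻¹))
        (φ β (γ * α * γ⁻¹) (φ γ α h)) = φ (β * γ) α h
  φ_comul : ∀ (γ α β : π) (h : A (α * β)),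
    TensorProduct.map (φ γ α).toLinearMap (φ γ β).toLinearMap (Δ α β h) =
      Δ (γ * α * γ⁻¹) (γ * β * γ⁻¹)
        (cast (congrArg A (by group : γ * (α * β) * γ⁻¹ = γ * α * γ⁻¹ * (γ * β * γ⁻¹)))
          (φ γ (α * β) h))
  φ_counit : ∀ (γ : π) (h : A 1),
    ε (cast (congrArg A (by group : γ * 1 * γ⁻¹ = 1)) (φ γ 1 h)) = ε h

/-- A quasitriangular structure (universal R-matrix) on a crossed Hopf
`π`-coalgebra. -/
structure QTStruct (A : π → Type u) [∀ α, Ring (A α)] [∀ α, Algebra k (A α)]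
    (T : TCoalgStruct k π A) where
  /-- the universal R-matrix -/
  R : ∀ α β : π, A α ⊗[k] A β
  /-- its inverse -/
  Rinv : ∀ α β : π, A α ⊗[k] A β
  R_inv_left : ∀ α β : π, Rinv α β * R α β = 1
  R_inv_right : ∀ α β : π, R α β * Rinv α β = 1
  R_rel1 : ∀ (α β : π) (h : A (α * β)),
    R α β * T.Δ α β h =
      ((TensorProduct.comm k (A β) (A α))
        (TensorProduct.map
          ((lcast k π A (by group : α⁻¹ * (α * β * α⁻¹) * α⁻¹⁻¹ = β)).comp
            (T.φ α⁻¹ (α * β * α⁻¹)).toLinearMap) LinearMap.id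
          (T.Δ (α * β * α⁻¹) α
            (cast (congrArg A (by group : α * β = α * β * α⁻¹ * α)) h)))) * R α β
  R_rel2 : ∀ α β γ : π,
    TensorProduct.map LinearMap.id (T.Δ β γ).toLinearMap (R α (β * γ)) =
      (TensorProduct.map LinearMap.id ((TensorProduct.mk k (A β) (A γ)) 1) (R α γ)) *
      (TensorProduct.map LinearMap.id ((TensorProduct.mk k (A β) (A γ)).flip 1) (R α β))
  R_rel3 : ∀ α β γ : π,
    TensorProduct.map (T.Δ α β).toLinearMap LinearMap.id (R (α * β) γ) =
      (TensorProduct.map ((TensorProduct.mk k (A α) (A β)).flip 1) LinearMap.id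
        (TensorProduct.map
          ((lcast k π A (by group : β * (β⁻¹ * α * β) * β⁻¹ = α)).comp
            (T.φ β (β⁻¹ * α * β)).toLinearMap) LinearMap.id (R (β⁻¹ * α * β) γ))) *
      (TensorProduct.map ((TensorProduct.mk k (A α) (A β)) 1) LinearMap.id (R β γ))
  R_phi : ∀ α β γ : π,
    TensorProduct.map (T.φ α β).toLinearMap (T.φ α γ).toLinearMap (R β γ) =
      R (α * β * α⁻¹) (α * γ * α⁻¹)

/-- The `α`-th Drinfeld element `u_α = (s_{α⁻¹} ∘ φ_α)(ζ_{(α⁻¹).i}) · ξ_{(α).i}`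
of a quasitriangular crossed Hopf `π`-coalgebra. -/
noncomputable def drinfeld
    (A : π → Type u) [∀ α, Ring (A α)] [∀ α, Algebra k (A α)]
    (T : TCoalgStruct k π A) (Q : QTStruct k π A T) (α : π) : A α :=
  LinearMap.mul' k (A α)
    ((TensorProduct.comm k (A α) (A α))
      (TensorProduct.map LinearMap.id
        ((lcast k π A (inv_inv α)).comp ((T.s α⁻¹).comp
          ((lcast k π A (by group : α * α⁻¹ * α⁻¹ = α⁻¹)).comp
            (T.φ α α⁻¹).toLinearMap)))
        (Q.R α α⁻¹)))

/-! The classical argument for Drinfeld's element, with the crossing `φ` carried along.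
Put `sandwich c (a ⊗ b) = (s_{α⁻¹} φ_α)(b) · c · a`. Since `s_{α⁻¹} φ_α` is
anti-multiplicative, `sandwich c (t · r) = sandwich (sandwich c t) r`, and
`u_α = sandwich 1 R_{α,α⁻¹}`. Expanding `x ∈ H_α` by `(H_α ⊗ Δ_{α⁻¹,α}) Δ_{α,1}` and contracting
either the last two legs with the antipode, or (after coassociativity and `R Δ = Δ^cop R`) the
first two legs with `R`, gives `u_α x = (s_{α⁻¹} φ_α s_α)(x) u_α`. For the proposed inverse `w`
this turns `u_α w` into `sandwich u_α R⁻¹ = sandwich 1 (R R⁻¹) = 1`; so `w` is a right inverse,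
`(s_{α⁻¹} φ_α s_α)(w)` is a left inverse, and the two coincide. -/

section DrinfeldElement

variable {k : Type u} [Field k] {π : Type u}
  {A : π → Type u} [∀ α, Ring (A α)] [∀ α, Algebra k (A α)]

@[simp] lemma lcast_self {α : π} (e : α = α) : lcast k π A e = LinearMap.id := rfl

lemma lcast_apply {α β : π} (e : α = β) (x : A α) :
    lcast k π A e x = cast (congrArg A e) x := rfl

@[simp] lemma lcast_lcast {α β γ : π} (e₁ : α = β) (e₂ : β = γ) (x : A α) :
    lcast k π A e₂ (lcast k π A e₁ x) = lcast k π A (e₁.trans e₂) x := by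
  subst e₁ e₂; rfl

lemma lcast_mul {α β : π} (e : α = β) (x y : A α) :
    lcast k π A e (x * y) = lcast k π A e x * lcast k π A e y := by
  subst e; rfl

lemma lcast_one {α β : π} (e : α = β) : lcast k π A e (1 : A α) = 1 := by
  subst e; rfl

lemma lcast_injective {α β : π} (e : α = β) : Function.Injective (lcast k π A e) := by
  subst e; exact Function.injective_id

namespace TCoalgStruct

variable [Group π] (T : TCoalgStruct k π A)

lemma φ_lcast (γ : π) {α β : π} (e : α = β) (x : A α) :
    T.φ γ β (lcast k π A e x) = lcast k π A (by rw [e]) (T.φ γ α x) := by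
  subst e; rfl

lemma φ_congr_left {γ γ' : π} (e : γ = γ') (α : π) (x : A α) :
    T.φ γ' α x = lcast k π A (by rw [e]) (T.φ γ α x) := by
  subst e; rfl

/-- `φ_1` is idempotent (by `φ_mul`) and injective, hence the identity. -/
lemma φ_one_apply (α : π) (x : A α) : lcast k π A (by group) (T.φ 1 α x) = x := by
  let ψ : A α → A α := fun y => lcast k π A (by group) (T.φ 1 α y)
  have hψ : Function.Injective ψ := (lcast_injective _).comp (T.φ_bij 1 α).1
  refine hψ ?_
  have hmul : lcast k π A (by group) (T.φ 1 _ (T.φ 1 α x)) = T.φ (1 * 1) α x := T.φ_mul 1 1 α x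
  show lcast k π A _ (T.φ 1 α (lcast k π A _ (T.φ 1 α x))) = lcast k π A _ (T.φ 1 α x)
  conv_rhs => rw [T.φ_congr_left (one_mul 1), ← hmul]
  simp only [φ_lcast, lcast_lcast]

lemma φ_φ_inv_apply (β α : π) (x : A α) :
    lcast k π A (by group) (T.φ β (β⁻¹ * α * β⁻¹⁻¹) (T.φ β⁻¹ α x)) = x := by
  have hmul : lcast k π A (by group) (T.φ β _ (T.φ β⁻¹ α x)) = T.φ (β * β⁻¹) α x :=
    T.φ_mul β β⁻¹ α x
  conv_rhs => rw [← T.φ_one_apply α x, T.φ_congr_left (mul_inv_cancel β), ← hmul]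
  simp only [lcast_lcast]

noncomputable def comulRightOne (α : π) : A α →ₗ[k] A α ⊗[k] A 1 :=
  (T.Δ α 1).toLinearMap ∘ₗ lcast k π A (mul_one α).symm

noncomputable def comulLeftOne (α : π) : A α →ₗ[k] A 1 ⊗[k] A α :=
  (T.Δ 1 α).toLinearMap ∘ₗ lcast k π A (one_mul α).symm

noncomputable def comulInv (α : π) : A 1 →ₗ[k] A α ⊗[k] A α⁻¹ :=
  (T.Δ α α⁻¹).toLinearMap ∘ₗ lcast k π A (mul_inv_cancel α).symm

noncomputable def comulInv' (α : π) : A 1 →ₗ[k] A α⁻¹ ⊗[k] A α :=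
  (T.Δ α⁻¹ α).toLinearMap ∘ₗ lcast k π A (inv_mul_cancel α).symm

noncomputable def s' (α : π) : A α⁻¹ →ₗ[k] A α :=
  lcast k π A (inv_inv α) ∘ₗ T.s α⁻¹

lemma rid_map_counit_comulRightOne (α : π) (x : A α) :
    TensorProduct.rid k (A α) (map LinearMap.id T.ε.toLinearMap (T.comulRightOne α x)) = x := by
  simpa [comulRightOne, lcast_apply] using T.counit_right α (lcast k π A (mul_one α).symm x)

lemma lid_map_counit_comulLeftOne (α : π) (x : A α) :
    TensorProduct.lid k (A α) (map T.ε.toLinearMap LinearMap.id (T.comulLeftOne α x)) = x := by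
  simpa [comulLeftOne, lcast_apply] using T.counit_left α (lcast k π A (one_mul α).symm x)

lemma comulInv_one (α : π) : T.comulInv α 1 = 1 := by
  simp [comulInv, lcast_one]

lemma comulInv'_mul (α : π) (h h' : A 1) :
    T.comulInv' α (h * h') = T.comulInv' α h * T.comulInv' α h' := by
  simp [comulInv', lcast_mul]

lemma antipode_right_of_inv_eq {β γ : π} (e : β⁻¹ = γ) (h : A 1) :
    LinearMap.mul' k (A β) (map LinearMap.id (lcast k π A (by rw [← e, inv_inv]) ∘ₗ T.s γ)
      (T.Δ β γ (lcast k π A (by rw [← e, mul_inv_cancel]) h))) = T.ε h • 1 := by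
  subst e
  simpa [Algebra.algebraMap_eq_smul_one, lcast_apply] using
    T.antipode_right β (lcast k π A (mul_inv_cancel β).symm h)

lemma antipode_left_of_inv_eq {β γ : π} (e : β⁻¹ = γ) (h : A 1) :
    LinearMap.mul' k (A β) (map (lcast k π A (by rw [← e, inv_inv]) ∘ₗ T.s γ) LinearMap.id
      (T.Δ γ β (lcast k π A (by rw [← e, inv_mul_cancel]) h))) = T.ε h • 1 := by
  subst e
  simpa [Algebra.algebraMap_eq_smul_one, lcast_apply] using
    T.antipode_left β (lcast k π A (inv_mul_cancel β).symm h)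

lemma mul'_map_id_s_comulInv' (α : π) (h : A 1) :
    LinearMap.mul' k (A α⁻¹) (map LinearMap.id (T.s α) (T.comulInv' α h)) = T.ε h • 1 := by
  simpa [comulInv'] using T.antipode_right_of_inv_eq (inv_inv α) h

lemma mul'_map_s_id_comulInv (α : π) (h : A 1) :
    LinearMap.mul' k (A α⁻¹) (map (T.s α) LinearMap.id (T.comulInv α h)) = T.ε h • 1 := by
  simpa [comulInv] using T.antipode_left_of_inv_eq (inv_inv α) h

lemma mul'_map_s'_id_comulInv' (α : π) (h : A 1) :
    LinearMap.mul' k (A α) (map (T.s' α) LinearMap.id (T.comulInv' α h)) = T.ε h • 1 :=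
  T.antipode_left_of_inv_eq rfl h

lemma coassoc_of_eq {α β γ ρ σ τ : π} (e₁ : α * β = ρ) (e₂ : β * γ = σ) (e : ρ * γ = τ)
    (e' : α * σ = τ) (x : A τ) :
    TensorProduct.assoc k (A α) (A β) (A γ)
        (map ((T.Δ α β).toLinearMap ∘ₗ lcast k π A e₁.symm) LinearMap.id
          (T.Δ ρ γ (lcast k π A e.symm x))) =
      map LinearMap.id ((T.Δ β γ).toLinearMap ∘ₗ lcast k π A e₂.symm)
        (T.Δ α σ (lcast k π A e'.symm x)) := by
  subst e₁ e₂ e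
  simpa [lcast_apply] using T.coassoc α β γ x

lemma assoc_map_comulInv_comulLeftOne (α : π) (x : A α) :
    TensorProduct.assoc k (A α) (A α⁻¹) (A α)
        (map (T.comulInv α) LinearMap.id (T.comulLeftOne α x)) =
      map LinearMap.id (T.comulInv' α) (T.comulRightOne α x) :=
  T.coassoc_of_eq (mul_inv_cancel α) (inv_mul_cancel α) (one_mul α) (mul_one α) x

noncomputable def comul₃ (α : π) : A α →ₗ[k] A α ⊗[k] (A α⁻¹ ⊗[k] A α) :=
  map LinearMap.id (T.comulInv' α) ∘ₗ T.comulRightOne α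

lemma map_id_comul₃ {M : Type*} [AddCommMonoid M] [Module k M] {α : π}
    (g : A α⁻¹ ⊗[k] A α →ₗ[k] M) (m : M) (hg : ∀ h, g (T.comulInv' α h) = T.ε h • m)
    (x : A α) :
    map LinearMap.id g (T.comul₃ α x) = x ⊗ₜ m := by
  have key : ∀ t : A α ⊗[k] A 1, map LinearMap.id g (map LinearMap.id (T.comulInv' α) t) =
      TensorProduct.rid k (A α) (map LinearMap.id T.ε.toLinearMap t) ⊗ₜ m := by
    intro t
    induction t using TensorProduct.induction_on with
    | zero => simp
    | tmul a h => simp [hg, smul_tmul]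
    | add t t' ht ht' => simp [ht, ht', add_tmul]
  rw [comul₃, LinearMap.comp_apply, key, rid_map_counit_comulRightOne]

lemma map_assoc_symm_comul₃ {M : Type*} [AddCommMonoid M] [Module k M] {α : π}
    (f : A α ⊗[k] A α⁻¹ →ₗ[k] M) (m : M) (hf : ∀ h, f (T.comulInv α h) = T.ε h • m)
    (x : A α) :
    map f LinearMap.id ((TensorProduct.assoc k (A α) (A α⁻¹) (A α)).symm (T.comul₃ α x)) =
      m ⊗ₜ x := by
  have key : ∀ t : A 1 ⊗[k] A α, map f LinearMap.id (map (T.comulInv α) LinearMap.id t) =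
      m ⊗ₜ TensorProduct.lid k (A α) (map T.ε.toLinearMap LinearMap.id t) := by
    intro t
    induction t using TensorProduct.induction_on with
    | zero => simp
    | tmul h a => simp [hf, smul_tmul]
    | add t t' ht ht' => simp [ht, ht', tmul_add]
  rw [comul₃, LinearMap.comp_apply, ← assoc_map_comulInv_comulLeftOne,
    LinearEquiv.symm_apply_apply, key, lid_map_counit_comulLeftOne]

section Sweedler

variable {α : π} {x : A α} {I : Finset (A α × A 1)}

lemma sum_counit_smul_eq (hI : T.comulRightOne α x = ∑ i ∈ I, i.1 ⊗ₜ i.2) :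
    ∑ i ∈ I, T.ε i.2 • i.1 = x := by
  conv_rhs => rw [← T.rid_map_counit_comulRightOne α x, hI]
  simp [map_sum]

lemma sum_s_tmul_one_mul_comulInv' (hI : T.comulRightOne α x = ∑ i ∈ I, i.1 ⊗ₜ i.2) :
    ∑ i ∈ I, (T.s α i.1 ⊗ₜ[k] (1 : A α)) * T.comulInv' α i.2 = (1 : A α⁻¹) ⊗ₜ x := by
  rw [← T.map_assoc_symm_comul₃ (LinearMap.mul' k (A α⁻¹) ∘ₗ map (T.s α) LinearMap.id) 1
    (T.mul'_map_s_id_comulInv α) x, comul₃, LinearMap.comp_apply, hI]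
  simp only [map_sum, map_tmul, LinearMap.id_apply]
  refine Finset.sum_congr rfl fun i _ => ?_
  induction T.comulInv' α i.2 using TensorProduct.induction_on with
  | zero => simp
  | tmul b c => simp [Algebra.TensorProduct.tmul_mul_tmul]
  | add r r' hr hr' => rw [mul_add, hr, hr', tmul_add, map_add, map_add]

end Sweedler

lemma s_mul (α : π) (x y : A α) : T.s α (x * y) = T.s α y * T.s α x := by
  obtain ⟨I, hI⟩ := TensorProduct.exists_finset (T.comulRightOne α x)
  obtain ⟨J, hJ⟩ := TensorProduct.exists_finset (T.comulRightOne α y)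
  let P : A α⁻¹ ⊗[k] A α →ₗ[k] A α⁻¹ := LinearMap.mul' k (A α⁻¹) ∘ₗ map LinearMap.id (T.s α)
  have hP : ∀ c r, P ((c ⊗ₜ 1) * r) = c * P r := by
    intro c r
    induction r using TensorProduct.induction_on with
    | zero => simp
    | tmul a b => simp [P, Algebra.TensorProduct.tmul_mul_tmul, mul_assoc]
    | add r r' hr hr' => rw [mul_add, map_add, hr, hr', map_add, mul_add]
  have hcomm : ∀ (c : A α⁻¹) (z : A α),
      ((1 : A α⁻¹) ⊗ₜ[k] z) * (c ⊗ₜ 1) = (c ⊗ₜ 1) * ((1 : A α⁻¹) ⊗ₜ[k] z) := by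
    simp [Algebra.TensorProduct.tmul_mul_tmul]
  calc T.s α (x * y) = P ((1 ⊗ₜ x) * (1 ⊗ₜ y)) := by
        simp [P, Algebra.TensorProduct.tmul_mul_tmul]
    _ = ∑ j ∈ J, T.s α j.1 * P ((1 ⊗ₜ x) * T.comulInv' α j.2) := by
        rw [← T.sum_s_tmul_one_mul_comulInv' hJ, Finset.mul_sum, map_sum]
        refine Finset.sum_congr rfl fun j _ => ?_
        rw [← mul_assoc, hcomm, mul_assoc, hP]
    _ = ∑ j ∈ J, ∑ i ∈ I,
          T.s α j.1 * (T.s α i.1 * P (T.comulInv' α i.2 * T.comulInv' α j.2)) := by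
        simp only [← T.sum_s_tmul_one_mul_comulInv' hI, Finset.sum_mul, map_sum, mul_assoc,
          hP, Finset.mul_sum]
    _ = ∑ j ∈ J, ∑ i ∈ I, T.s α (T.ε j.2 • j.1) * T.s α (T.ε i.2 • i.1) := by
        refine Finset.sum_congr rfl fun j _ => Finset.sum_congr rfl fun i _ => ?_
        simp only [← T.comulInv'_mul, P, LinearMap.comp_apply, T.mul'_map_id_s_comulInv']
        rw [map_mul, map_smul, map_smul, mul_smul_comm, mul_one, mul_smul_comm,
          smul_mul_smul_comm, mul_comm (T.ε i.2)]
    _ = T.s α y * T.s α x := by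
        rw [← Finset.sum_mul_sum, ← map_sum, ← map_sum, T.sum_counit_smul_eq hI,
          T.sum_counit_smul_eq hJ]

lemma s_one (α : π) : T.s α 1 = 1 := by
  simpa [comulInv_one, Algebra.TensorProduct.one_def] using T.mul'_map_s_id_comulInv α 1

noncomputable def sφ (α : π) : A α⁻¹ →ₗ[k] A α :=
  T.s' α ∘ₗ lcast k π A (by group : α * α⁻¹ * α⁻¹ = α⁻¹) ∘ₗ (T.φ α α⁻¹).toLinearMap

noncomputable def sφs (α : π) : A α →ₗ[k] A α := T.sφ α ∘ₗ T.s α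

lemma sφ_mul (α : π) (x y : A α⁻¹) : T.sφ α (x * y) = T.sφ α y * T.sφ α x := by
  simp [sφ, s', s_mul, lcast_mul]

lemma sφ_one (α : π) : T.sφ α 1 = 1 := by
  simp [sφ, s', s_one, lcast_one]

lemma sφ_lcast_φ (α : π) (x : A α⁻¹) :
    T.sφ α (lcast k π A (by group) (T.φ α⁻¹ α⁻¹ x)) = T.s' α x := by
  simp only [sφ, LinearMap.comp_apply, AlgHom.toLinearMap_apply, φ_lcast, lcast_lcast]
  rw [T.φ_φ_inv_apply α α⁻¹ x]

noncomputable def sandwich (α : π) (c : A α) : A α ⊗[k] A α⁻¹ →ₗ[k] A α :=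
  LinearMap.mul' k (A α) ∘ₗ map (LinearMap.mulRight k c ∘ₗ T.sφ α) LinearMap.id ∘ₗ
    (TensorProduct.comm k (A α) (A α⁻¹)).toLinearMap

@[simp] lemma sandwich_tmul (α : π) (c x : A α) (y : A α⁻¹) :
    T.sandwich α c (x ⊗ₜ y) = T.sφ α y * c * x := by
  simp [sandwich]

lemma sandwich_smul (α : π) (a : k) (c : A α) (t : A α ⊗[k] A α⁻¹) :
    T.sandwich α (a • c) t = a • T.sandwich α c t := by
  induction t using TensorProduct.induction_on with
  | zero => simp
  | tmul x y => simp
  | add t t' ht ht' => rw [map_add, map_add, ht, ht', smul_add]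

lemma sandwich_one (α : π) (c : A α) : T.sandwich α c 1 = c := by
  simp [Algebra.TensorProduct.one_def, sφ_one]

lemma sandwich_mul_tmul (α : π) (c : A α) (t : A α ⊗[k] A α⁻¹) (x : A α) (y : A α⁻¹) :
    T.sandwich α c (t * (x ⊗ₜ y)) = T.sφ α y * T.sandwich α c t * x := by
  induction t using TensorProduct.induction_on with
  | zero => simp
  | tmul a b => simp [Algebra.TensorProduct.tmul_mul_tmul, sφ_mul, mul_assoc]
  | add t t' ht ht' => rw [add_mul, map_add, map_add, ht, ht', mul_add, add_mul]

lemma sandwich_mul (α : π) (c : A α) (t r : A α ⊗[k] A α⁻¹) :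
    T.sandwich α c (t * r) = T.sandwich α (T.sandwich α c t) r := by
  induction r using TensorProduct.induction_on with
  | zero => simp
  | tmul x y => rw [sandwich_mul_tmul, sandwich_tmul]
  | add r r' hr hr' => rw [mul_add, map_add, map_add, hr, hr']

lemma mul'_comm_map_id_sφ (α : π) (t : A α ⊗[k] A α⁻¹) :
    LinearMap.mul' k (A α) (TensorProduct.comm k (A α) (A α) (map LinearMap.id (T.sφ α) t)) =
      T.sandwich α 1 t := by
  induction t using TensorProduct.induction_on with
  | zero => simp
  | tmul x y => simp
  | add t t' ht ht' => simp only [map_add, ht, ht']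

lemma sandwich_one_comm_map_φ_comulInv' (α : π) (h : A 1) :
    T.sandwich α 1 (TensorProduct.comm k (A α⁻¹) (A α)
      (map (lcast k π A (by group) ∘ₗ (T.φ α⁻¹ α⁻¹).toLinearMap) LinearMap.id
        (T.comulInv' α h))) = T.ε h • 1 := by
  rw [← T.mul'_map_s'_id_comulInv' α h]
  induction T.comulInv' α h using TensorProduct.induction_on with
  | zero => simp
  | tmul y x => simp [sφ_lcast_φ]
  | add t t' ht ht' => simp only [map_add, ht, ht']

lemma mul_mul'_comm_map_of_rightInverse {α : π} {u : A α}
    (hu : ∀ x, u * x = T.sφs α x * u) {σ : A α⁻¹ →ₗ[k] A α} (hσ : ∀ y, T.s α (σ y) = y)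
    (t : A α ⊗[k] A α⁻¹) :
    u * LinearMap.mul' k (A α) (TensorProduct.comm k (A α) (A α) (map LinearMap.id σ t)) =
      T.sandwich α u t := by
  induction t using TensorProduct.induction_on with
  | zero => simp
  | tmul x y =>
    simp only [map_tmul, LinearMap.id_apply, comm_tmul, LinearMap.mul'_apply, sandwich_tmul]
    rw [← mul_assoc, hu, sφs, LinearMap.comp_apply, hσ]
  | add t t' ht ht' => simp only [map_add, mul_add, ht, ht']

end TCoalgStruct

namespace QTStruct

variable [Group π] {T : TCoalgStruct k π A} (Q : QTStruct k π A T)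

lemma R_mul_Δ_of_eq {α β γ : π} (e : α * β * α⁻¹ = γ) (h : A (α * β)) :
    Q.R α β * T.Δ α β h =
      TensorProduct.comm k (A β) (A α)
        (map (lcast k π A (by rw [← e]; group) ∘ₗ (T.φ α⁻¹ γ).toLinearMap) LinearMap.id
          (T.Δ γ α (lcast k π A (by rw [← e]; group) h))) * Q.R α β := by
  subst e
  exact Q.R_rel1 α β h

lemma R_mul_comulInv (α : π) (h : A 1) :
    Q.R α α⁻¹ * T.comulInv α h =
      TensorProduct.comm k (A α⁻¹) (A α)
        (map (lcast k π A (by group) ∘ₗ (T.φ α⁻¹ α⁻¹).toLinearMap) LinearMap.id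
          (T.comulInv' α h)) * Q.R α α⁻¹ := by
  simpa [TCoalgStruct.comulInv, TCoalgStruct.comulInv'] using
    Q.R_mul_Δ_of_eq (β := α⁻¹) (by group) (lcast k π A (mul_inv_cancel α).symm h)

lemma drinfeld_eq_sandwich (α : π) :
    drinfeld k π A T Q α = T.sandwich α 1 (Q.R α α⁻¹) :=
  T.mul'_comm_map_id_sφ α (Q.R α α⁻¹)

lemma sandwich_one_R_mul (α : π) (t : A α ⊗[k] A α⁻¹) :
    T.sandwich α 1 (Q.R α α⁻¹ * t) = T.sandwich α (drinfeld k π A T Q α) t := by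
  rw [T.sandwich_mul, ← drinfeld_eq_sandwich]

lemma sandwich_drinfeld_comulInv (α : π) (h : A 1) :
    T.sandwich α (drinfeld k π A T Q α) (T.comulInv α h) = T.ε h • drinfeld k π A T Q α := by
  rw [← sandwich_one_R_mul, R_mul_comulInv, T.sandwich_mul,
    T.sandwich_one_comm_map_φ_comulInv', T.sandwich_smul, ← drinfeld_eq_sandwich]

lemma drinfeld_mul (α : π) (x : A α) :
    drinfeld k π A T Q α * x = T.sφs α x * drinfeld k π A T Q α := by
  set u := drinfeld k π A T Q α
  let P : A α⁻¹ ⊗[k] A α →ₗ[k] A α⁻¹ := LinearMap.mul' k (A α⁻¹) ∘ₗ map LinearMap.id (T.s α)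
  -- `X (a ⊗ (b ⊗ c)) = (s_{α⁻¹} φ_α)(b · s_α c) · u · a`
  let X : A α ⊗[k] (A α⁻¹ ⊗[k] A α) →ₗ[k] A α :=
    LinearMap.mul' k (A α) ∘ₗ (TensorProduct.comm k (A α) (A α)).toLinearMap ∘ₗ
      map LinearMap.id (LinearMap.mulRight k u ∘ₗ T.sφ α ∘ₗ P)
  have hX : X ∘ₗ (TensorProduct.assoc k (A α) (A α⁻¹) (A α)).toLinearMap =
      LinearMap.mul' k (A α) ∘ₗ (TensorProduct.comm k (A α) (A α)).toLinearMap ∘ₗ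
        map LinearMap.id (T.sφs α) ∘ₗ map (T.sandwich α u) LinearMap.id := by
    refine TensorProduct.ext_threefold fun a b c => ?_
    simp [X, P, TCoalgStruct.sφs, T.sφ_mul, mul_assoc]
  have hP : ∀ h, (LinearMap.mulRight k u ∘ₗ T.sφ α ∘ₗ P) (T.comulInv' α h) = T.ε h • u := by
    intro h
    simp [P, T.mul'_map_id_s_comulInv', T.sφ_one]
  have hantipode : X (T.comul₃ α x) = u * x := by
    simp [X, T.map_id_comul₃ _ u hP]
  have hR : X (T.comul₃ α x) = T.sφs α x * u := by
    rw [← (TensorProduct.assoc k _ _ _).apply_symm_apply (T.comul₃ α x),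
      ← LinearEquiv.coe_toLinearMap, ← LinearMap.comp_apply X, hX]
    simp only [LinearMap.comp_apply]
    rw [T.map_assoc_symm_comul₃ _ u (Q.sandwich_drinfeld_comulInv α)]
    simp
  rw [← hantipode, hR]

end QTStruct

end DrinfeldElement

theorem drinfeld_isUnit
    (A : π → Type u) [∀ α, Ring (A α)] [∀ α, Algebra k (A α)]
    (T : TCoalgStruct k π A) (Q : QTStruct k π A T)
    (sInv : ∀ α : π, A α⁻¹ →ₗ[k] A α)
    (hsInv₂ : ∀ (α : π) (x : A α⁻¹), T.s α (sInv α x) = x)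
    (α : π) :
    drinfeld k π A T Q α *
        (LinearMap.mul' k (A α)
          ((TensorProduct.comm k (A α) (A α))
            (TensorProduct.map LinearMap.id (sInv α) (Q.Rinv α α⁻¹)))) = 1 ∧
    (LinearMap.mul' k (A α)
          ((TensorProduct.comm k (A α) (A α))
            (TensorProduct.map LinearMap.id (sInv α) (Q.Rinv α α⁻¹)))) *
        drinfeld k π A T Q α = 1 := by
  set u := drinfeld k π A T Q α
  set w := LinearMap.mul' k (A α)
    ((TensorProduct.comm k (A α) (A α)) (TensorProduct.map LinearMap.id (sInv α) (Q.Rinv α α⁻¹)))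
  have hright : u * w = 1 := by
    rw [T.mul_mul'_comm_map_of_rightInverse (Q.drinfeld_mul α) (hsInv₂ α),
      ← Q.sandwich_one_R_mul, Q.R_inv_right, T.sandwich_one]
  have hleft : T.sφs α w * u = 1 := by
    rw [← Q.drinfeld_mul]
    exact hright
  exact ⟨hright, left_inv_eq_right_inv hleft hright ▸ hleft⟩
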